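/- Let n ≥ 1. There exists a constant C > 0, depending only on n, such that the following holds: for every C² vector field X : ℝⁿ → ℝⁿ with ∫_{ℝⁿ} |X|² dx < ∞ and ∫_{ℝⁿ} |Δ_conf X|² dx < ∞, one has ∫_{ℝⁿ} |ℒX|² dx ≤ C ∫_{ℝⁿ} |⟨X, Δ_conf X⟩| dx (in particular the left-hand side is finite; the right-hand side is finite by the Cauchy–Schwarz inequality). -/

import Mathlib

open MeasureTheory

/-- Partial derivative `∂_j f` of a real-valued function on `ℝⁿ`. -/
noncomputable def pd (n : ℕ) (f : (Fin n → ℝ) → ℝ) (j : Fin n) (x : Fin n → ℝ) : ℝ :=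
  fderiv ℝ f x (Pi.single j 1)

/-- Euclidean conformal Killing operator:
`(ℒX)_{ij} = ∂_i X_j + ∂_j X_i − (2/n)(div X) δ_{ij}`. -/
noncomputable def ckOp (n : ℕ) (X : (Fin n → ℝ) → (Fin n → ℝ)) (i j : Fin n)
    (x : Fin n → ℝ) : ℝ :=
  pd n (fun y => X y j) i x + pd n (fun y => X y i) j x
    - (2 / (n : ℝ)) * (∑ k, pd n (fun y => X y k) k x) * (if i = j then 1 else 0)

/-- Euclidean conformal Killing Laplacian: `(Δ_conf X)_j = Σ_i ∂_i (ℒX)_{ij}`. -/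
noncomputable def ckLap (n : ℕ) (X : (Fin n → ℝ) → (Fin n → ℝ)) (j : Fin n)
    (x : Fin n → ℝ) : ℝ :=
  ∑ i, pd n (fun y => ckOp n X i j y) i x

open Set Function

variable {n : ℕ}


variable {n : ℕ}

lemma contDiff_apply_comp {k : ℕ∞} {X : (Fin n → ℝ) → (Fin n → ℝ)} (hX : ContDiff ℝ k X)
    (i : Fin n) : ContDiff ℝ k (fun y => X y i) :=
  (ContinuousLinearMap.proj i : (Fin n → ℝ) →L[ℝ] ℝ).contDiff.comp hX

lemma pd_contDiff {k : ℕ∞} {f : (Fin n → ℝ) → ℝ} (hf : ContDiff ℝ (k + 1) f) (j : Fin n) :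
    ContDiff ℝ k (pd n f j) := by
  have h1 : ContDiff ℝ k (fderiv ℝ f) := hf.fderiv_right le_rfl
  exact (ContinuousLinearMap.apply ℝ ℝ (Pi.single j 1 : Fin n → ℝ)).contDiff.comp h1

lemma pd_continuous {f : (Fin n → ℝ) → ℝ} (hf : ContDiff ℝ 1 f) (j : Fin n) :
    Continuous (pd n f j) := by
  have : ContDiff ℝ ((0 : ℕ∞) + 1) f := by exact_mod_cast hf
  exact (pd_contDiff this j).continuous

lemma pd_mul {f g : (Fin n → ℝ) → ℝ} {x : Fin n → ℝ} (hf : DifferentiableAt ℝ f x)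
    (hg : DifferentiableAt ℝ g x) (j : Fin n) :
    pd n (fun y => f y * g y) j x = f x * pd n g j x + g x * pd n f j x := by
  simp only [pd]
  rw [fderiv_fun_mul hf hg]
  simp

lemma pd_sum {ι : Type*} (s : Finset ι) {f : ι → (Fin n → ℝ) → ℝ} {x : Fin n → ℝ}
    (hf : ∀ i ∈ s, DifferentiableAt ℝ (f i) x) (j : Fin n) :
    pd n (fun y => ∑ i ∈ s, f i y) j x = ∑ i ∈ s, pd n (f i) j x := by
  simp only [pd]
  rw [fderiv_fun_sum hf]
  simp

lemma pd_add {f g : (Fin n → ℝ) → ℝ} {x : Fin n → ℝ} (hf : DifferentiableAt ℝ f x)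
    (hg : DifferentiableAt ℝ g x) (j : Fin n) :
    pd n (fun y => f y + g y) j x = pd n f j x + pd n g j x := by
  simp only [pd]
  rw [fderiv_fun_add hf hg]
  simp

lemma pd_sub {f g : (Fin n → ℝ) → ℝ} {x : Fin n → ℝ} (hf : DifferentiableAt ℝ f x)
    (hg : DifferentiableAt ℝ g x) (j : Fin n) :
    pd n (fun y => f y - g y) j x = pd n f j x - pd n g j x := by
  simp only [pd]
  rw [fderiv_fun_sub hf hg]
  simp

lemma pd_const_mul {f : (Fin n → ℝ) → ℝ} {x : Fin n → ℝ} (hf : DifferentiableAt ℝ f x)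
    (c : ℝ) (j : Fin n) :
    pd n (fun y => c * f y) j x = c * pd n f j x := by
  simp only [pd]
  rw [fderiv_const_mul hf]
  simp

lemma pd_eq_zero_of_not_mem_tsupport {f : (Fin n → ℝ) → ℝ} {x : Fin n → ℝ}
    (hx : x ∉ tsupport f) (j : Fin n) : pd n f j x = 0 := by
  have : fderiv ℝ f x = 0 := by
    have := support_fderiv_subset (𝕜 := ℝ) (f := f)
    by_contra h
    exact hx (this h)
  simp [pd, this]


section reg

variable {X : (Fin n → ℝ) → (Fin n → ℝ)} (hX : ContDiff ℝ 2 X)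
include hX

lemma pd_comp_contDiff (i j : Fin n) : ContDiff ℝ 1 (pd n (fun y => X y j) i) := by
  have : ContDiff ℝ ((1 : ℕ∞) + 1) (fun y => X y j) := by
    exact_mod_cast contDiff_apply_comp hX j
  exact pd_contDiff this i

lemma ckOp_contDiff (i j : Fin n) : ContDiff ℝ 1 (ckOp n X i j) := by
  unfold ckOp
  exact ((pd_comp_contDiff hX i j).add (pd_comp_contDiff hX j i)).sub
    ((contDiff_const.mul (ContDiff.sum fun k _ => pd_comp_contDiff hX k k)).mul contDiff_const)

lemma ckOp_differentiable (i j : Fin n) : Differentiable ℝ (ckOp n X i j) :=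
  (ckOp_contDiff hX i j).differentiable (by simp)

lemma ckOp_continuous (i j : Fin n) : Continuous (ckOp n X i j) :=
  (ckOp_contDiff hX i j).continuous

lemma ckLap_continuous (j : Fin n) : Continuous (ckLap n X j) := by
  unfold ckLap
  exact continuous_finset_sum _ fun i _ => pd_continuous (ckOp_contDiff hX i j) i

end reg

lemma ckOp_symm {X : (Fin n → ℝ) → (Fin n → ℝ)} (i j : Fin n) (x : Fin n → ℝ) :
    ckOp n X i j x = ckOp n X j i x := by
  simp only [ckOp, eq_comm (a := i) (b := j)]
  ring_nf

/-- The key algebraic identity `|L|² = 2 ⟨L, ∇X⟩`, using symmetry and tracelessness. -/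
lemma ckOp_sq_identity (hn : (n : ℝ) ≠ 0) (X : (Fin n → ℝ) → (Fin n → ℝ))
    (x : Fin n → ℝ) :
    ∑ i, ∑ j, (ckOp n X i j x) ^ 2
      = 2 * ∑ i, ∑ j, ckOp n X i j x * pd n (fun y => X y j) i x := by
  set P : Fin n → Fin n → ℝ := fun i j => pd n (fun y => X y j) i x with hP
  set d : ℝ := ∑ k, P k k with hd
  set c : ℝ := 2 / (n : ℝ) with hc
  have hL : ∀ i j, ckOp n X i j x = P i j + P j i - c * d * (if i = j then 1 else 0) := by
    intro i j; rfl
  have htrace : ∑ i, ckOp n X i i x = 0 := by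
    have h1 : ∑ i, ckOp n X i i x = ∑ i : Fin n, (2 * P i i - c * d) :=
      Finset.sum_congr rfl fun i _ => by rw [hL, if_pos rfl]; ring
    have h2 : ∑ i : Fin n, (2 * P i i - c * d) = 2 * d - n * (c * d) := by
      rw [Finset.sum_sub_distrib, Finset.sum_const, Finset.card_univ, Fintype.card_fin,
        ← Finset.mul_sum, ← hd, nsmul_eq_mul]
    rw [h1, h2, hc]
    field_simp
    ring
  have hsymm : ∀ i j, ckOp n X i j x = ckOp n X j i x := fun i j => ckOp_symm i j x
  -- expand the square
  have expand : ∀ i j, (ckOp n X i j x) ^ 2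
      = ckOp n X i j x * P i j + ckOp n X i j x * P j i
        - c * d * (ckOp n X i j x * (if i = j then 1 else 0)) := by
    intro i j
    rw [pow_two]
    nth_rewrite 2 [hL i j]
    ring
  calc ∑ i, ∑ j, (ckOp n X i j x) ^ 2
      = (∑ i, ∑ j, ckOp n X i j x * P i j) + (∑ i, ∑ j, ckOp n X i j x * P j i)
          - c * d * ∑ i, ∑ j, ckOp n X i j x * (if i = j then 1 else 0) := by
        simp only [expand, Finset.sum_sub_distrib, Finset.sum_add_distrib, Finset.mul_sum]
    _ = 2 * ∑ i, ∑ j, ckOp n X i j x * P i j := by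
        have h1 : ∑ i, ∑ j, ckOp n X i j x * P j i = ∑ i, ∑ j, ckOp n X i j x * P i j := by
          rw [Finset.sum_comm]
          refine Finset.sum_congr rfl fun j _ => Finset.sum_congr rfl fun i _ => ?_
          rw [hsymm j i]
        have h2 : ∑ i, ∑ j, ckOp n X i j x * (if i = j then 1 else 0) = 0 := by
          have : ∀ i : Fin n, ∑ j, ckOp n X i j x * (if i = j then 1 else 0)
              = ckOp n X i i x := by
            intro i
            rw [Finset.sum_eq_single i] <;> simp +contextual [eq_comm]
          simp only [this, htrace]
        rw [h1, h2]
        ring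

/-- Divergence theorem: the integral of the divergence of a `C¹` compactly supported
vector field on `ℝⁿ⁺¹` vanishes. -/
lemma integral_div_eq_zero {m : ℕ} (F : (Fin (m + 1) → ℝ) → (Fin (m + 1) → ℝ))
    (hF : ContDiff ℝ 1 F) (hsupp : HasCompactSupport F) :
    ∫ x, ∑ i, pd (m + 1) (fun y => F y i) i x = 0 := by
  obtain ⟨r, hrsub⟩ : ∃ r : ℝ, 0 ≤ r ∧ tsupport F ⊆ Metric.closedBall 0 r := by
    obtain ⟨r, hr⟩ := hsupp.isBounded.subset_closedBall 0
    exact ⟨max r 0, le_max_right _ _,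
      hr.trans (Metric.closedBall_subset_closedBall (le_max_left _ _))⟩
  obtain ⟨hr0, hrsub⟩ := hrsub
  set a : Fin (m + 1) → ℝ := fun _ => -(r + 1) with ha
  set b : Fin (m + 1) → ℝ := fun _ => r + 1 with hb
  have hle : a ≤ b := fun i => by simp [ha, hb]; linarith
  have hts_comp : ∀ i, tsupport (fun y => F y i) ⊆ Metric.closedBall 0 r := by
    intro i
    refine (closure_mono ?_).trans hrsub
    intro y hy
    simp only [Function.mem_support] at hy ⊢
    intro h0
    exact hy (by rw [h0]; rfl)
  have hzero_out : ∀ x : Fin (m + 1) → ℝ, r < ‖x‖ → ∀ i j,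
      pd (m + 1) (fun y => F y i) j x = 0 := by
    intro x hx i j
    refine pd_eq_zero_of_not_mem_tsupport (fun hmem => ?_) j
    have := hts_comp i hmem
    simp only [Metric.mem_closedBall, dist_zero_right] at this
    linarith
  have hdiff : ∀ (i : Fin (m + 1)), Differentiable ℝ (fun y => F y i) :=
    fun i => (contDiff_apply_comp hF i).differentiable (by simp)
  have key := integral_divergence_of_hasFDerivAt_off_countable a b hle
    (fun x i => F x i) (fun x => fderiv ℝ F x) ∅ countable_empty
    hF.continuous.continuousOn
    (fun x _ => hF.differentiable (by simp) |>.differentiableAt.hasFDerivAt)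
    ?_
  · -- faces vanish
    have hface : ∀ (i : Fin (m + 1)) (c : ℝ), r < |c| →
        ∀ x : Fin m → ℝ, F (Fin.insertNth (α := fun _ => ℝ) i c x) i = 0 := by
      intro i c hc x
      have hnorm : r < ‖Fin.insertNth (α := fun _ => ℝ) i c x‖ := by
        calc r < |c| := hc
        _ = ‖(Fin.insertNth (α := fun _ => ℝ) i c x) i‖ := by
            rw [Fin.insertNth_apply_same]; rfl
        _ ≤ ‖Fin.insertNth (α := fun _ => ℝ) i c x‖ := norm_le_pi_norm _ i
      have hnot : Fin.insertNth (α := fun _ => ℝ) i c x ∉ tsupport F := by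
        intro hmem
        have := hrsub hmem
        simp only [Metric.mem_closedBall, dist_zero_right] at this
        linarith
      exact congrFun (image_eq_zero_of_notMem_tsupport hnot) i
    have hRHS : ∑ i : Fin (m + 1),
        ((∫ x in Set.Icc (a ∘ Fin.succAbove i) (b ∘ Fin.succAbove i),
            F (Fin.insertNth (α := fun _ => ℝ) i (b i) x) i)
          - ∫ x in Set.Icc (a ∘ Fin.succAbove i) (b ∘ Fin.succAbove i),
            F (Fin.insertNth (α := fun _ => ℝ) i (a i) x) i) = 0 := by
      refine Finset.sum_eq_zero fun i _ => ?_
      have hai : a i = -(r + 1) := rfl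
      have hbi : b i = r + 1 := rfl
      have h1 : ∀ x : Fin m → ℝ, F (Fin.insertNth (α := fun _ => ℝ) i (b i) x) i = 0 := by
        intro x
        refine hface i (b i) ?_ x
        rw [hbi, abs_of_nonneg (by linarith)]; linarith
      have h2 : ∀ x : Fin m → ℝ, F (Fin.insertNth (α := fun _ => ℝ) i (a i) x) i = 0 := by
        intro x
        refine hface i (a i) ?_ x
        rw [hai, abs_of_nonpos (by linarith), neg_neg]; linarith
      simp [h1, h2]
    rw [hRHS] at key
    -- identify the divergence integrand with pd
    have hdivnorm : ∀ x, (∑ i, fderiv ℝ F x (Pi.single i 1) i)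
        = ∑ i, pd (m + 1) (fun y => F y i) i x := by
      intro x
      refine Finset.sum_congr rfl fun i _ => ?_
      have : fderiv ℝ F x (Pi.single i 1) i
          = fderiv ℝ (fun y => F y i) x (Pi.single i 1) := by
        have h := ((hF.differentiable (by simp)).differentiableAt (x := x)).hasFDerivAt
        have h2 := ((ContinuousLinearMap.proj i :
            (Fin (m + 1) → ℝ) →L[ℝ] ℝ).hasFDerivAt).comp x h
        have h3 : HasFDerivAt (fun y => F y i)
            ((ContinuousLinearMap.proj i : (Fin (m + 1) → ℝ) →L[ℝ] ℝ).comp (fderiv ℝ F x)) x :=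
          h2
        rw [h3.fderiv]
        rfl
      rw [this]
      rfl
    rw [← setIntegral_eq_integral_of_forall_compl_eq_zero (s := Set.Icc a b)]
    · rw [← key]
      exact setIntegral_congr_fun measurableSet_Icc (fun x _ => (hdivnorm x).symm)
    · intro x hx
      have : r < ‖x‖ := by
        rw [Set.mem_Icc] at hx
        rcases not_and_or.mp hx with h | h
        · rw [Pi.le_def] at h
          push_neg at h
          obtain ⟨i, hi⟩ := h
          have hai : a i = -(r + 1) := rfl
          rw [hai] at hi
          have h2 : r + 1 ≤ |x i| := by
            rw [abs_of_nonpos (by linarith)]; linarith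
          calc r < r + 1 := by linarith
            _ ≤ |x i| := h2
            _ ≤ ‖x‖ := norm_le_pi_norm x i
        · rw [Pi.le_def] at h
          push_neg at h
          obtain ⟨i, hi⟩ := h
          have hbi : b i = r + 1 := rfl
          rw [hbi] at hi
          have h2 : r + 1 ≤ |x i| := by
            rw [abs_of_nonneg (by linarith)]; linarith
          calc r < r + 1 := by linarith
            _ ≤ |x i| := h2
            _ ≤ ‖x‖ := norm_le_pi_norm x i
      exact Finset.sum_eq_zero fun i _ => hzero_out x this i i
  · -- integrability of the divergence on the box
    refine (Continuous.integrableOn_Icc ?_)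
    exact continuous_finset_sum _ fun i _ =>
      (continuous_apply i).comp
        (((ContinuousLinearMap.apply ℝ (Fin (m + 1) → ℝ)
            (Pi.single i 1 : Fin (m + 1) → ℝ)).continuous).comp
          (hF.continuous_fderiv (by simp)))

/-! ### Cutoff functions -/

noncomputable def cutg : ℝ → ℝ := fun t => Real.smoothTransition ((4 - t) / 3)

lemma cutg_contDiff : ContDiff ℝ 1 cutg :=
  (Real.smoothTransition.contDiff (n := 1)).comp
    ((contDiff_const.sub contDiff_id).div_const 3)

lemma cutg_one {t : ℝ} (h : t ≤ 1) : cutg t = 1 :=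
  Real.smoothTransition.one_of_one_le (by rw [le_div_iff₀ (by norm_num)]; linarith)

lemma cutg_zero {t : ℝ} (h : 4 ≤ t) : cutg t = 0 :=
  Real.smoothTransition.zero_of_nonpos (by rw [div_nonpos_iff]; right; constructor <;> linarith)

lemma cutg_nonneg (t : ℝ) : 0 ≤ cutg t := Real.smoothTransition.nonneg _

lemma cutg_le_one (t : ℝ) : cutg t ≤ 1 := Real.smoothTransition.le_one _

lemma deriv_cutg_zero {t : ℝ} (h : 4 < t) : deriv cutg t = 0 := by
  have hev : cutg =ᶠ[nhds t] fun _ => 0 := by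
    filter_upwards [Ioi_mem_nhds h] with s hs
    exact cutg_zero (le_of_lt hs)
  rw [hev.deriv_eq]
  simp

lemma deriv_cutg_zero' {t : ℝ} (h : t < 1) : deriv cutg t = 0 := by
  have hev : cutg =ᶠ[nhds t] fun _ => 1 := by
    filter_upwards [Iio_mem_nhds h] with s hs
    exact cutg_one (le_of_lt hs)
  rw [hev.deriv_eq]
  simp

lemma cutg_deriv_bound : ∃ M : ℝ, 0 ≤ M ∧ ∀ t, |deriv cutg t| ≤ M := by
  have hc : Continuous (deriv cutg) := cutg_contDiff.continuous_deriv le_rfl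
  have hsupp : HasCompactSupport (deriv cutg) := by
    apply HasCompactSupport.intro (isCompact_Icc (a := (1:ℝ)) (b := 4))
    intro t ht
    rw [Set.mem_Icc] at ht
    rcases not_and_or.mp ht with h | h
    · exact deriv_cutg_zero' (by linarith [not_le.mp h])
    · exact deriv_cutg_zero (not_le.mp h)
  obtain ⟨C, hC⟩ := hsupp.exists_bound_of_continuous hc
  exact ⟨|C|, abs_nonneg _, fun t => (hC t).trans (le_abs_self _)⟩

/-- chain rule for `pd` -/
lemma pd_comp {f : (Fin n → ℝ) → ℝ} {g : ℝ → ℝ} {x : Fin n → ℝ}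
    (hf : DifferentiableAt ℝ f x) (hg : DifferentiableAt ℝ g (f x)) (i : Fin n) :
    pd n (fun y => g (f y)) i x = deriv g (f x) * pd n f i x := by
  have h := (hg.hasDerivAt.comp_hasFDerivAt x hf.hasFDerivAt)
  have h' : HasFDerivAt (fun y => g (f y)) (deriv g (f x) • fderiv ℝ f x) x := h
  rw [pd, h'.fderiv]
  simp [pd]

noncomputable def qsq (n : ℕ) : (Fin n → ℝ) → ℝ := fun x => ∑ i, x i ^ 2

lemma qsq_contDiff : ContDiff ℝ (⊤ : ℕ∞) (qsq n) :=
  ContDiff.sum fun i _ => ((ContinuousLinearMap.proj i :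
    (Fin n → ℝ) →L[ℝ] ℝ).contDiff).pow 2

lemma qsq_nonneg (x : Fin n → ℝ) : 0 ≤ qsq n x :=
  Finset.sum_nonneg fun i _ => sq_nonneg _

lemma sq_le_qsq (x : Fin n → ℝ) (i : Fin n) : x i ^ 2 ≤ qsq n x :=
  Finset.single_le_sum (fun j _ => sq_nonneg (x j)) (Finset.mem_univ i)

lemma pd_qsq (x : Fin n → ℝ) (i : Fin n) : pd n (qsq n) i x = 2 * x i := by
  have hcoord : ∀ k : Fin n, pd n (fun y => y k) i x = (Pi.single i 1 : Fin n → ℝ) k := by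
    intro k
    have h : fderiv ℝ (fun y : Fin n → ℝ => y k) x
        = (ContinuousLinearMap.proj k : (Fin n → ℝ) →L[ℝ] ℝ) :=
      ((ContinuousLinearMap.proj k : (Fin n → ℝ) →L[ℝ] ℝ).hasFDerivAt (x := x)).fderiv
    rw [pd, h]
    rfl
  have hdiff : ∀ k : Fin n, DifferentiableAt ℝ (fun y : Fin n → ℝ => y k) x := fun k =>
    (ContinuousLinearMap.proj k : (Fin n → ℝ) →L[ℝ] ℝ).differentiableAt
  have hq' : qsq n = fun y : Fin n → ℝ => ∑ k, y k * y k := by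
    funext y
    exact Finset.sum_congr rfl fun k _ => pow_two (y k)
  have : pd n (qsq n) i x = ∑ k, pd n (fun y => y k * y k) i x := by
    rw [hq']
    exact pd_sum (f := fun (k : Fin n) (y : Fin n → ℝ) => y k * y k) Finset.univ
      (fun k _ => (hdiff k).mul (hdiff k)) i (x := x)
  rw [this]
  have : ∀ k, pd n (fun y : Fin n → ℝ => y k * y k) i x
      = 2 * x k * (Pi.single i 1 : Fin n → ℝ) k := by
    intro k
    rw [pd_mul (hdiff k) (hdiff k) i, hcoord k]
    ring
  simp only [this]
  rw [Finset.sum_eq_single i]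
  · simp
  · intro k _ hk
    rw [Pi.single_eq_of_ne (by exact fun h => hk h) 1]
    ring
  · intro h
    exact absurd (Finset.mem_univ i) h

/-! ### Scaled cutoffs -/

noncomputable def psiR (n : ℕ) (R : ℝ) : (Fin n → ℝ) → ℝ :=
  fun x => cutg (qsq n x / R ^ 2)

noncomputable def etaR (n : ℕ) (R : ℝ) : (Fin n → ℝ) → ℝ :=
  fun x => (psiR n R x) ^ 2

noncomputable def cR (n : ℕ) (R : ℝ) (x : Fin n → ℝ) : ℝ :=
  4 * deriv cutg (qsq n x / R ^ 2) / R ^ 2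

lemma qsqdiv_contDiff (R : ℝ) : ContDiff ℝ 1 (fun x : Fin n → ℝ => qsq n x / R ^ 2) :=
  (qsq_contDiff.of_le (mod_cast le_top)).div_const _

lemma psiR_contDiff (R : ℝ) : ContDiff ℝ 1 (psiR n R) :=
  cutg_contDiff.comp (qsqdiv_contDiff R)

lemma etaR_contDiff (R : ℝ) : ContDiff ℝ 1 (etaR n R) := (psiR_contDiff R).pow 2

lemma psiR_nonneg (R : ℝ) (x : Fin n → ℝ) : 0 ≤ psiR n R x := cutg_nonneg _

lemma psiR_le_one (R : ℝ) (x : Fin n → ℝ) : psiR n R x ≤ 1 := cutg_le_one _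

lemma etaR_nonneg (R : ℝ) (x : Fin n → ℝ) : 0 ≤ etaR n R x := sq_nonneg _

lemma etaR_le_one (R : ℝ) (x : Fin n → ℝ) : etaR n R x ≤ 1 := by
  rw [etaR]
  calc (psiR n R x) ^ 2 ≤ 1 ^ 2 := by
        apply pow_le_pow_left₀ (psiR_nonneg R x) (psiR_le_one R x)
    _ = 1 := one_pow 2

lemma etaR_eq_one {R : ℝ} (hR : 1 ≤ R) {x : Fin n → ℝ} (hx : qsq n x ≤ R ^ 2) :
    etaR n R x = 1 := by
  have hR2 : (0:ℝ) < R ^ 2 := by positivity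
  have : psiR n R x = 1 := cutg_one (by rw [div_le_one hR2]; exact hx)
  rw [etaR, this, one_pow]

lemma etaR_compact_support {R : ℝ} (hR : 1 ≤ R) : HasCompactSupport (etaR n R) := by
  have hR0 : (0:ℝ) < R := by linarith
  apply HasCompactSupport.intro (isCompact_closedBall (0 : Fin n → ℝ) (2 * R))
  intro x hx
  have hq : 4 * R ^ 2 ≤ qsq n x := by
    by_contra hlt
    push_neg at hlt
    apply hx
    rw [Metric.mem_closedBall, dist_zero_right]
    rw [pi_norm_le_iff_of_nonneg (by positivity)]
    intro i
    have h1 : x i ^ 2 < 4 * R ^ 2 := lt_of_le_of_lt (sq_le_qsq x i) hlt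
    have h2 : x i ^ 2 < (2 * R) ^ 2 := by nlinarith
    rw [Real.norm_eq_abs, abs_le]
    constructor <;> nlinarith [sq_nonneg (x i + 2 * R), sq_nonneg (x i - 2 * R)]
  have : psiR n R x = 0 := by
    apply cutg_zero
    rw [le_div_iff₀ (by positivity)]
    linarith
  rw [etaR, this]
  norm_num

lemma pd_etaR {R : ℝ} (hR : 1 ≤ R) (x : Fin n → ℝ) (i : Fin n) :
    pd n (etaR n R) i x = psiR n R x * cR n R x * x i := by
  have hqd : DifferentiableAt ℝ (fun y : Fin n → ℝ => qsq n y / R ^ 2) x :=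
    ((qsqdiv_contDiff R).differentiable (by simp)).differentiableAt
  have hψd : DifferentiableAt ℝ (psiR n R) x :=
    ((psiR_contDiff R).differentiable (by simp)).differentiableAt
  have h1 : pd n (etaR n R) i x = 2 * psiR n R x * pd n (psiR n R) i x := by
    have heq : etaR n R = fun y => psiR n R y * psiR n R y := by
      funext y; rw [etaR, pow_two]
    rw [heq, pd_mul hψd hψd i]
    ring
  have h2 : pd n (psiR n R) i x
      = deriv cutg (qsq n x / R ^ 2) * pd n (fun y => qsq n y / R ^ 2) i x := by
    have : psiR n R = fun y => cutg (qsq n y / R ^ 2) := rfl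
    rw [this, pd_comp hqd (cutg_contDiff.differentiable (by simp)).differentiableAt i]
  have h3 : pd n (fun y : Fin n → ℝ => qsq n y / R ^ 2) i x = 2 * x i / R ^ 2 := by
    have heq : (fun y : Fin n → ℝ => qsq n y / R ^ 2)
        = fun y => (R ^ 2)⁻¹ * qsq n y := by
      funext y; rw [inv_mul_eq_div]
    rw [heq, pd_const_mul ((qsq_contDiff.differentiable (by simp)).differentiableAt) _ i,
      pd_qsq, inv_mul_eq_div]
  rw [h1, h2, h3, cR]
  ring

lemma cR_sq_qsq_bound {R : ℝ} (hR : 1 ≤ R) {M : ℝ} (hM : 0 ≤ M)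
    (hMb : ∀ t, |deriv cutg t| ≤ M) (x : Fin n → ℝ) :
    (cR n R x) ^ 2 * qsq n x ≤ 64 * M ^ 2 / R ^ 2 := by
  have hR0 : (0:ℝ) < R := by linarith
  by_cases hd : deriv cutg (qsq n x / R ^ 2) = 0
  · rw [cR, hd]
    have : (0:ℝ) ≤ 64 * M ^ 2 / R ^ 2 := by positivity
    simpa using this
  · have hu : qsq n x / R ^ 2 ≤ 4 := by
      by_contra h
      exact hd (deriv_cutg_zero (not_le.mp h))
    have hq4 : qsq n x ≤ 4 * R ^ 2 := by
      rw [div_le_iff₀ (by positivity)] at hu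
      linarith
    have hder : (deriv cutg (qsq n x / R ^ 2)) ^ 2 ≤ M ^ 2 := by
      rw [← sq_abs]
      exact pow_le_pow_left₀ (abs_nonneg _) (hMb _) 2
    have hcR : (cR n R x) ^ 2 ≤ 16 * M ^ 2 / R ^ 4 := by
      rw [cR, div_pow, mul_pow]
      rw [div_le_div_iff₀ (by positivity) (by positivity)]
      calc 4 ^ 2 * deriv cutg (qsq n x / R ^ 2) ^ 2 * R ^ 4
          ≤ 4 ^ 2 * M ^ 2 * R ^ 4 := by nlinarith [sq_nonneg R, pow_pos hR0 4]
        _ = 16 * M ^ 2 * (R ^ 2) ^ 2 := by ring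
    calc (cR n R x) ^ 2 * qsq n x ≤ (16 * M ^ 2 / R ^ 4) * (4 * R ^ 2) := by
          apply mul_le_mul hcR hq4 (qsq_nonneg x) (by positivity)
      _ = 64 * M ^ 2 / R ^ 2 := by field_simp; ring

/-! ### The field `G i = ∑ j (ℒX)_{ij} X_j` and the divergence expansion -/

noncomputable def GG (n : ℕ) (X : (Fin n → ℝ) → (Fin n → ℝ)) (i : Fin n)
    (x : Fin n → ℝ) : ℝ :=
  ∑ j, ckOp n X i j x * X x j

lemma GG_contDiff {X : (Fin n → ℝ) → (Fin n → ℝ)} (hX : ContDiff ℝ 2 X) (i : Fin n) :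
    ContDiff ℝ 1 (GG n X i) :=
  ContDiff.sum fun j _ => (ckOp_contDiff hX i j).mul ((contDiff_apply_comp hX j).of_le
    (by norm_num))

lemma sum_pd_GG {X : (Fin n → ℝ) → (Fin n → ℝ)} (hX : ContDiff ℝ 2 X)
    (hn : (n : ℝ) ≠ 0) (x : Fin n → ℝ) :
    ∑ i, pd n (GG n X i) i x
      = (1 / 2) * (∑ i, ∑ j, (ckOp n X i j x) ^ 2) + ∑ j, X x j * ckLap n X j x := by
  have hXdiff : ∀ j : Fin n, DifferentiableAt ℝ (fun y => X y j) x := fun j =>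
    ((contDiff_apply_comp hX j).differentiable (by norm_num)).differentiableAt
  have hLdiff : ∀ i j : Fin n, DifferentiableAt ℝ (ckOp n X i j) x := fun i j =>
    (ckOp_differentiable hX i j).differentiableAt
  have h1 : ∀ i, pd n (GG n X i) i x
      = ∑ j, (ckOp n X i j x * pd n (fun y => X y j) i x
          + X x j * pd n (fun y => ckOp n X i j y) i x) := by
    intro i
    have h := pd_sum (f := fun (j : Fin n) (y : Fin n → ℝ) => ckOp n X i j y * X y j)
      Finset.univ (fun j _ => (hLdiff i j).mul (hXdiff j)) i (x := x)
    have hGeq : GG n X i = fun y => ∑ j, ckOp n X i j y * X y j := rfl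
    rw [hGeq, h]
    exact Finset.sum_congr rfl fun j _ => pd_mul (hLdiff i j) (hXdiff j) i
  calc ∑ i, pd n (GG n X i) i x
      = (∑ i, ∑ j, ckOp n X i j x * pd n (fun y => X y j) i x)
        + ∑ i, ∑ j, X x j * pd n (fun y => ckOp n X i j y) i x := by
        simp only [h1, Finset.sum_add_distrib]
    _ = (1 / 2) * (∑ i, ∑ j, (ckOp n X i j x) ^ 2) + ∑ j, X x j * ckLap n X j x := by
        congr 1
        · rw [ckOp_sq_identity hn X x]; ring
        · rw [Finset.sum_comm]
          refine Finset.sum_congr rfl fun j _ => ?_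
          rw [ckLap, Finset.mul_sum]

lemma div_expand {X : (Fin n → ℝ) → (Fin n → ℝ)} (hX : ContDiff ℝ 2 X)
    (hn : (n : ℝ) ≠ 0) {R : ℝ} (hR : 1 ≤ R) (x : Fin n → ℝ) :
    ∑ i, pd n (fun y => etaR n R y * GG n X i y) i x
      = (∑ i, pd n (etaR n R) i x * GG n X i x)
        + etaR n R x * (∑ j, X x j * ckLap n X j x)
        + etaR n R x * ((1 / 2) * ∑ i, ∑ j, (ckOp n X i j x) ^ 2) := by
  have hηd : DifferentiableAt ℝ (etaR n R) x :=
    ((etaR_contDiff R).differentiable (by simp)).differentiableAt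
  have hGd : ∀ i, DifferentiableAt ℝ (GG n X i) x := fun i =>
    ((GG_contDiff hX i).differentiable (by simp)).differentiableAt
  have h1 : ∀ i, pd n (fun y => etaR n R y * GG n X i y) i x
      = etaR n R x * pd n (GG n X i) i x + GG n X i x * pd n (etaR n R) i x :=
    fun i => pd_mul hηd (hGd i) i
  calc ∑ i, pd n (fun y => etaR n R y * GG n X i y) i x
      = (∑ i, pd n (etaR n R) i x * GG n X i x)
        + etaR n R x * ∑ i, pd n (GG n X i) i x := by
        simp only [h1, Finset.sum_add_distrib, Finset.mul_sum]
        rw [add_comm]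
        congr 1
        exact Finset.sum_congr rfl fun i _ => mul_comm _ _
    _ = _ := by
        rw [sum_pd_GG hX hn x]
        ring

lemma abs_mul_le_quarter_sq_add_sq (u v : ℝ) : |u * v| ≤ u ^ 2 / 4 + v ^ 2 := by
  have h1 : |u * v| = |u| * |v| := abs_mul u v
  nlinarith [sq_nonneg (|u| / 2 - |v|), sq_abs u, sq_abs v, abs_nonneg u, abs_nonneg v]

lemma caccioppoli {m : ℕ} (X : (Fin (m + 1) → ℝ) → (Fin (m + 1) → ℝ)) (hX : ContDiff ℝ 2 X)
    (hX2 : Integrable (fun x => ∑ i, (X x i) ^ 2))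
    (hXd : Integrable (fun x => |∑ j, X x j * ckLap (m + 1) X j x|))
    {R : ℝ} (hR : 1 ≤ R) {M : ℝ} (hM : 0 ≤ M) (hMb : ∀ t, |deriv cutg t| ≤ M) :
    ∫ x, etaR (m + 1) R x * ∑ i, ∑ j, (ckOp (m + 1) X i j x) ^ 2
      ≤ 4 * (∫ x, |∑ j, X x j * ckLap (m + 1) X j x|)
        + 256 * M ^ 2 / R ^ 2 * ∫ x, ∑ i, (X x i) ^ 2 := by
  have hn : ((m + 1 : ℕ) : ℝ) ≠ 0 := Nat.cast_ne_zero.mpr (Nat.succ_ne_zero m)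
  set e1 : (Fin (m + 1) → ℝ) → ℝ :=
    fun x => ∑ i, pd (m + 1) (etaR (m + 1) R) i x * GG (m + 1) X i x with he1
  set e2 : (Fin (m + 1) → ℝ) → ℝ :=
    fun x => etaR (m + 1) R x * (∑ j, X x j * ckLap (m + 1) X j x) with he2
  set e3 : (Fin (m + 1) → ℝ) → ℝ :=
    fun x => etaR (m + 1) R x * ((1 / 2) * ∑ i, ∑ j, (ckOp (m + 1) X i j x) ^ 2) with he3
  set eT : (Fin (m + 1) → ℝ) → ℝ :=
    fun x => etaR (m + 1) R x * ∑ i, ∑ j, (ckOp (m + 1) X i j x) ^ 2 with heT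
  -- compact support facts
  have hKc : IsCompact (tsupport (etaR (m + 1) R)) := etaR_compact_support hR
  have hout : ∀ x, x ∉ tsupport (etaR (m + 1) R) → etaR (m + 1) R x = 0 := fun x hx =>
    image_eq_zero_of_notMem_tsupport hx
  -- continuity facts
  have hηc : Continuous (etaR (m + 1) R) := (etaR_contDiff R).continuous
  have hGc : ∀ i, Continuous (GG (m + 1) X i) := fun i => (GG_contDiff hX i).continuous
  have hLc : ∀ i j, Continuous (ckOp (m + 1) X i j) := fun i j => ckOp_continuous hX i j
  have hL2c : Continuous (fun x => ∑ i, ∑ j, (ckOp (m + 1) X i j x) ^ 2) :=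
    continuous_finset_sum _ fun i _ => continuous_finset_sum _ fun j _ => (hLc i j).pow 2
  have hIPc : Continuous (fun x => ∑ j, X x j * ckLap (m + 1) X j x) :=
    continuous_finset_sum _ fun j _ =>
      ((contDiff_apply_comp hX j).continuous).mul (ckLap_continuous hX j)
  -- integrability
  have hie1 : Integrable e1 := by
    apply Continuous.integrable_of_hasCompactSupport
    · exact continuous_finset_sum _ fun i _ =>
        (pd_continuous (etaR_contDiff R) i).mul (hGc i)
    · apply HasCompactSupport.intro hKc
      intro x hx
      exact Finset.sum_eq_zero fun i _ => by
        rw [pd_eq_zero_of_not_mem_tsupport hx i, zero_mul]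
  have hie2 : Integrable e2 := by
    apply Continuous.integrable_of_hasCompactSupport (hηc.mul hIPc)
    apply HasCompactSupport.intro hKc
    intro x hx
    simp only [Pi.mul_apply, hout x hx, zero_mul]
  have hie3 : Integrable e3 := by
    apply Continuous.integrable_of_hasCompactSupport
      (hηc.mul (continuous_const.mul hL2c))
    apply HasCompactSupport.intro hKc
    intro x hx
    simp only [Pi.mul_apply, hout x hx, zero_mul]
  have hieT : Integrable eT := by
    apply Continuous.integrable_of_hasCompactSupport (hηc.mul hL2c)
    apply HasCompactSupport.intro hKc
    intro x hx
    simp only [Pi.mul_apply, hout x hx, zero_mul]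
  -- the divergence theorem
  have hF : ContDiff ℝ 1 (fun x (i : Fin (m + 1)) => etaR (m + 1) R x * GG (m + 1) X i x) :=
    contDiff_pi.mpr fun i => (etaR_contDiff R).mul (GG_contDiff hX i)
  have hFsupp : HasCompactSupport
      (fun x (i : Fin (m + 1)) => etaR (m + 1) R x * GG (m + 1) X i x) := by
    apply HasCompactSupport.intro hKc
    intro x hx
    funext i
    simp only [hout x hx, zero_mul]
    rfl
  have hdiv : ∫ x, ∑ i, pd (m + 1)
      (fun y => etaR (m + 1) R y * GG (m + 1) X i y) i x = 0 :=
    integral_div_eq_zero _ hF hFsupp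
  have hexp : (fun x => ∑ i, pd (m + 1)
        (fun y => etaR (m + 1) R y * GG (m + 1) X i y) i x)
      = fun x => e1 x + e2 x + e3 x :=
    funext fun x => div_expand hX hn hR x
  rw [hexp] at hdiv
  have hie12 : Integrable (fun x => e1 x + e2 x) := hie1.add hie2
  rw [integral_add hie12 hie3, integral_add hie1 hie2] at hdiv
  -- ∫ e3 = (1/2) ∫ eT
  have he3T : ∫ x, e3 x = (1 / 2) * ∫ x, eT x := by
    rw [← integral_const_mul]
    refine integral_congr_ae (Filter.Eventually.of_forall fun x => ?_)
    rw [he3, heT]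
    ring
  -- pointwise bound on e1
  have hb1 : ∀ x, |e1 x| ≤ (1 / 4) * eT x + (64 * M ^ 2 / R ^ 2) * ∑ j, (X x j) ^ 2 := by
    intro x
    have hqb := cR_sq_qsq_bound (n := m + 1) hR hM hMb x
    have hX2nn : (0:ℝ) ≤ ∑ j, (X x j) ^ 2 := Finset.sum_nonneg fun j _ => sq_nonneg _
    have he1x : e1 x = ∑ i, ∑ j,
        (psiR (m + 1) R x * ckOp (m + 1) X i j x)
          * (cR (m + 1) R x * x i * X x j) := by
      rw [he1]
      refine Finset.sum_congr rfl fun i _ => ?_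
      rw [pd_etaR hR x i]
      have hGx : GG (m + 1) X i x = ∑ j, ckOp (m + 1) X i j x * X x j := rfl
      rw [hGx, Finset.mul_sum]
      exact Finset.sum_congr rfl fun j _ => by ring
    have hηψ : etaR (m + 1) R x = psiR (m + 1) R x ^ 2 := rfl
    have hqx : qsq (m + 1) x = ∑ i, x i ^ 2 := rfl
    calc |e1 x| = |∑ i, ∑ j, (psiR (m + 1) R x * ckOp (m + 1) X i j x)
          * (cR (m + 1) R x * x i * X x j)| := by rw [he1x]
      _ ≤ ∑ i, ∑ j, |(psiR (m + 1) R x * ckOp (m + 1) X i j x)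
          * (cR (m + 1) R x * x i * X x j)| :=
        (Finset.abs_sum_le_sum_abs _ _).trans
          (Finset.sum_le_sum fun i _ => Finset.abs_sum_le_sum_abs _ _)
      _ ≤ ∑ i, ∑ j, ((psiR (m + 1) R x * ckOp (m + 1) X i j x) ^ 2 / 4
          + (cR (m + 1) R x * x i * X x j) ^ 2) :=
        Finset.sum_le_sum fun i _ => Finset.sum_le_sum fun j _ =>
          abs_mul_le_quarter_sq_add_sq _ _
      _ = (1 / 4) * eT x
          + (cR (m + 1) R x ^ 2 * qsq (m + 1) x) * ∑ j, (X x j) ^ 2 := by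
        simp only [Finset.sum_add_distrib]
        congr 1
        · simp only [heT, hηψ, Finset.mul_sum]
          refine Finset.sum_congr rfl fun i _ => Finset.sum_congr rfl fun j _ => by ring
        · calc ∑ i, ∑ j, (cR (m + 1) R x * x i * X x j) ^ 2
              = ∑ i, (cR (m + 1) R x ^ 2 * x i ^ 2) * ∑ j, (X x j) ^ 2 := by
                refine Finset.sum_congr rfl fun i _ => ?_
                rw [Finset.mul_sum]
                exact Finset.sum_congr rfl fun j _ => by ring
            _ = (∑ i, cR (m + 1) R x ^ 2 * x i ^ 2) * ∑ j, (X x j) ^ 2 :=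
                (Finset.sum_mul _ _ _).symm
            _ = (cR (m + 1) R x ^ 2 * qsq (m + 1) x) * ∑ j, (X x j) ^ 2 := by
                rw [hqx]
                congr 1
                exact (Finset.mul_sum _ _ _).symm
      _ ≤ (1 / 4) * eT x + (64 * M ^ 2 / R ^ 2) * ∑ j, (X x j) ^ 2 := by
        have := mul_le_mul_of_nonneg_right hqb hX2nn
        linarith
  -- integral bounds
  have hrhsInt : Integrable
      (fun x => (1 / 4) * eT x + (64 * M ^ 2 / R ^ 2) * ∑ j, (X x j) ^ 2) :=
    (hieT.const_mul _).add (hX2.const_mul _)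
  have hIb1 : ∫ x, |e1 x|
      ≤ (1 / 4) * (∫ x, eT x) + (64 * M ^ 2 / R ^ 2) * ∫ x, ∑ i, (X x i) ^ 2 := by
    calc ∫ x, |e1 x|
        ≤ ∫ x, ((1 / 4) * eT x + (64 * M ^ 2 / R ^ 2) * ∑ j, (X x j) ^ 2) :=
          integral_mono hie1.abs hrhsInt hb1
      _ = (1 / 4) * (∫ x, eT x) + (64 * M ^ 2 / R ^ 2) * ∫ x, ∑ i, (X x i) ^ 2 := by
          rw [integral_add (hieT.const_mul _) (hX2.const_mul _), integral_const_mul,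
            integral_const_mul]
  have hIb2 : ∫ x, |e2 x| ≤ ∫ x, |∑ j, X x j * ckLap (m + 1) X j x| := by
    refine integral_mono hie2.abs hXd fun x => ?_
    rw [abs_mul]
    calc |etaR (m + 1) R x| * |∑ j, X x j * ckLap (m + 1) X j x|
        ≤ 1 * |∑ j, X x j * ckLap (m + 1) X j x| := by
          apply mul_le_mul_of_nonneg_right _ (abs_nonneg _)
          rw [abs_of_nonneg (etaR_nonneg R x)]
          exact etaR_le_one R x
      _ = |∑ j, X x j * ckLap (m + 1) X j x| := one_mul _
  have ha1 : |∫ x, e1 x| ≤ ∫ x, |e1 x| := by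
    simpa [Real.norm_eq_abs] using norm_integral_le_integral_norm (μ := volume) e1
  have ha2 : |∫ x, e2 x| ≤ ∫ x, |e2 x| := by
    simpa [Real.norm_eq_abs] using norm_integral_le_integral_norm (μ := volume) e2
  have hn1 : -(∫ x, e1 x) ≤ |∫ x, e1 x| := neg_le_abs _
  have hn2 : -(∫ x, e2 x) ≤ |∫ x, e2 x| := neg_le_abs _
  have hconst : 256 * M ^ 2 / R ^ 2 = 4 * (64 * M ^ 2 / R ^ 2) := by ring
  rw [he3T] at hdiv
  rw [hconst]
  linarith

lemma abs_mul_le_half_sq_add_sq (u v : ℝ) : |u * v| ≤ (u ^ 2 + v ^ 2) / 2 := by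
  have h1 : |u * v| = |u| * |v| := abs_mul u v
  nlinarith [sq_nonneg (|u| - |v|), sq_abs u, sq_abs v]

lemma eta_mul_integrable {X : (Fin n → ℝ) → (Fin n → ℝ)} (hX : ContDiff ℝ 2 X) {R : ℝ}
    (hR : 1 ≤ R) :
    Integrable (fun x => etaR n R x * ∑ i, ∑ j, (ckOp n X i j x) ^ 2) := by
  apply Continuous.integrable_of_hasCompactSupport
    ((etaR_contDiff R).continuous.mul (continuous_finset_sum _ fun i _ =>
      continuous_finset_sum _ fun j _ => (ckOp_continuous hX i j).pow 2))
  apply HasCompactSupport.intro (etaR_compact_support hR)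
  intro x hx
  simp only [Pi.mul_apply, image_eq_zero_of_notMem_tsupport hx, zero_mul]

/-- The Güneysu–Pigola-type lemma (Lemma 4.5 of the paper) specialized to
Euclidean `ℝⁿ`, with `C²` regularity: there is `C = C(n) > 0` such that for
every `C²` vector field `X` with `∫ |X|² < ∞` and `∫ |Δ_conf X|² < ∞`,
`∫ |ℒX|² ≤ C ∫ |⟨X, Δ_conf X⟩|` (in particular the left-hand side is finite). -/
theorem gueneysu_pigola_estimate
    (n : ℕ) (hn : 1 ≤ n) :
    ∃ C : ℝ, 0 < C ∧
      ∀ X : (Fin n → ℝ) → (Fin n → ℝ), ContDiff ℝ 2 X →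
        (∫⁻ x, ENNReal.ofReal (∑ i, (X x i) ^ 2)) < ⊤ →
        (∫⁻ x, ENNReal.ofReal (∑ j, (ckLap n X j x) ^ 2)) < ⊤ →
        (∫⁻ x, ENNReal.ofReal (∑ i, ∑ j, (ckOp n X i j x) ^ 2))
          ≤ ENNReal.ofReal C * ∫⁻ x, ENNReal.ofReal |∑ j, X x j * ckLap n X j x| := by
  obtain ⟨m, rfl⟩ : ∃ m, n = m + 1 := ⟨n - 1, (Nat.succ_pred_eq_of_pos hn).symm⟩
  obtain ⟨M, hM, hMb⟩ := cutg_deriv_bound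
  refine ⟨4, by norm_num, ?_⟩
  intro X hX h2 hlap
  -- basic continuity
  have hfXc : Continuous (fun x => ∑ i, (X x i) ^ 2) :=
    continuous_finset_sum _ fun i _ => ((contDiff_apply_comp hX i).continuous).pow 2
  have hfLc : Continuous (fun x => ∑ j, (ckLap (m + 1) X j x) ^ 2) :=
    continuous_finset_sum _ fun j _ => (ckLap_continuous hX j).pow 2
  have hfIc : Continuous (fun x => ∑ j, X x j * ckLap (m + 1) X j x) :=
    continuous_finset_sum _ fun j _ =>
      ((contDiff_apply_comp hX j).continuous).mul (ckLap_continuous hX j)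
  have hSc : Continuous (fun x => ∑ i, ∑ j, (ckOp (m + 1) X i j x) ^ 2) :=
    continuous_finset_sum _ fun i _ => continuous_finset_sum _ fun j _ =>
      (ckOp_continuous hX i j).pow 2
  -- integrability from the lintegral hypotheses
  have hIX : Integrable (fun x => ∑ i, (X x i) ^ 2) :=
    ⟨hfXc.aestronglyMeasurable,
      (hasFiniteIntegral_iff_ofReal (Filter.Eventually.of_forall fun x =>
        Finset.sum_nonneg fun i _ => sq_nonneg _)).mpr h2⟩
  have hIL : Integrable (fun x => ∑ j, (ckLap (m + 1) X j x) ^ 2) :=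
    ⟨hfLc.aestronglyMeasurable,
      (hasFiniteIntegral_iff_ofReal (Filter.Eventually.of_forall fun x =>
        Finset.sum_nonneg fun j _ => sq_nonneg _)).mpr hlap⟩
  -- integrability of the inner product term (Cauchy–Schwarz / AM-GM)
  have hptwise : ∀ x, |∑ j, X x j * ckLap (m + 1) X j x|
      ≤ (1 / 2) * ((∑ i, (X x i) ^ 2) + ∑ j, (ckLap (m + 1) X j x) ^ 2) := by
    intro x
    calc |∑ j, X x j * ckLap (m + 1) X j x|
        ≤ ∑ j, |X x j * ckLap (m + 1) X j x| := Finset.abs_sum_le_sum_abs _ _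
      _ ≤ ∑ j, ((X x j) ^ 2 + (ckLap (m + 1) X j x) ^ 2) / 2 :=
          Finset.sum_le_sum fun j _ => abs_mul_le_half_sq_add_sq _ _
      _ = (1 / 2) * ((∑ i, (X x i) ^ 2) + ∑ j, (ckLap (m + 1) X j x) ^ 2) := by
          rw [← Finset.sum_add_distrib, Finset.mul_sum]
          exact Finset.sum_congr rfl fun j _ => by ring
  have hXd : Integrable (fun x => |∑ j, X x j * ckLap (m + 1) X j x|) := by
    refine Integrable.mono' ((hIX.add hIL).const_mul (1 / 2))
      hfIc.abs.aestronglyMeasurable (Filter.Eventually.of_forall fun x => ?_)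
    rw [Real.norm_eq_abs, abs_abs]
    exact hptwise x
  set A : ℝ := ∫ x, |∑ j, X x j * ckLap (m + 1) X j x| with hA
  set I2 : ℝ := ∫ x, ∑ i, (X x i) ^ 2 with hI2
  -- the Caccioppoli estimate for each k
  have hkey : ∀ k : ℕ, (∫⁻ x, ENNReal.ofReal
        (etaR (m + 1) ((k : ℝ) + 1) x * ∑ i, ∑ j, (ckOp (m + 1) X i j x) ^ 2))
      ≤ ENNReal.ofReal (4 * A + 256 * M ^ 2 / ((k : ℝ) + 1) ^ 2 * I2) := by
    intro k
    have hR : (1:ℝ) ≤ (k : ℝ) + 1 := by linarith [Nat.cast_nonneg (α := ℝ) k]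
    have hint := eta_mul_integrable hX hR
    have hnn : ∀ x, 0 ≤ etaR (m + 1) ((k : ℝ) + 1) x
        * ∑ i, ∑ j, (ckOp (m + 1) X i j x) ^ 2 := fun x =>
      mul_nonneg (etaR_nonneg _ x) (Finset.sum_nonneg fun i _ =>
        Finset.sum_nonneg fun j _ => sq_nonneg _)
    rw [← ofReal_integral_eq_lintegral_ofReal hint (Filter.Eventually.of_forall hnn)]
    exact ENNReal.ofReal_le_ofReal (caccioppoli X hX hIX hXd hR hM hMb)
  -- pointwise convergence of the cutoffs
  have hlim : ∀ x : Fin (m + 1) → ℝ, Filter.Tendsto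
      (fun k : ℕ => ENNReal.ofReal
        (etaR (m + 1) ((k : ℝ) + 1) x * ∑ i, ∑ j, (ckOp (m + 1) X i j x) ^ 2))
      Filter.atTop (nhds (ENNReal.ofReal (∑ i, ∑ j, (ckOp (m + 1) X i j x) ^ 2))) := by
    intro x
    apply Filter.Tendsto.congr' _ tendsto_const_nhds
    filter_upwards [Filter.eventually_ge_atTop ⌈qsq (m + 1) x⌉₊] with k hk
    have h1 : qsq (m + 1) x ≤ (k : ℝ) := (Nat.le_ceil _).trans (Nat.cast_le.mpr hk)
    have h2 : qsq (m + 1) x ≤ ((k : ℝ) + 1) ^ 2 := by nlinarith [Nat.cast_nonneg (α := ℝ) k]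
    rw [etaR_eq_one (by linarith [Nat.cast_nonneg (α := ℝ) k]) h2, one_mul]
  -- Fatou-type argument
  have hmeas : ∀ k : ℕ, Measurable (fun x => ENNReal.ofReal
      (etaR (m + 1) ((k : ℝ) + 1) x * ∑ i, ∑ j, (ckOp (m + 1) X i j x) ^ 2)) := fun k =>
    ENNReal.measurable_ofReal.comp (((etaR_contDiff _).continuous.mul hSc).measurable)
  have hfatou : (∫⁻ x, ENNReal.ofReal (∑ i, ∑ j, (ckOp (m + 1) X i j x) ^ 2))
      ≤ Filter.liminf (fun k : ℕ => ∫⁻ x, ENNReal.ofReal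
        (etaR (m + 1) ((k : ℝ) + 1) x * ∑ i, ∑ j, (ckOp (m + 1) X i j x) ^ 2))
        Filter.atTop := by
    have := lintegral_liminf_le (μ := volume) (u := Filter.atTop) hmeas
    refine le_trans (le_of_eq ?_) this
    exact lintegral_congr fun x => ((hlim x).liminf_eq).symm
  -- the liminf of the bounds is ofReal (4 A)
  have htendsto : Filter.Tendsto
      (fun k : ℕ => ENNReal.ofReal (4 * A + 256 * M ^ 2 / ((k : ℝ) + 1) ^ 2 * I2))
      Filter.atTop (nhds (ENNReal.ofReal (4 * A))) := by
    apply (ENNReal.continuous_ofReal.tendsto _).comp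
    have h1 : Filter.Tendsto (fun k : ℕ => ((k : ℝ) + 1)) Filter.atTop Filter.atTop :=
      Filter.tendsto_atTop_add_const_right _ 1 tendsto_natCast_atTop_atTop
    have h2 : Filter.Tendsto (fun k : ℕ => ((k : ℝ) + 1) ^ 2) Filter.atTop Filter.atTop :=
      (Filter.tendsto_pow_atTop two_ne_zero).comp h1
    have h3 : Filter.Tendsto (fun k : ℕ => (((k : ℝ) + 1) ^ 2)⁻¹) Filter.atTop (nhds 0) :=
      h2.inv_tendsto_atTop
    have h4 : Filter.Tendsto
        (fun k : ℕ => 256 * M ^ 2 / ((k : ℝ) + 1) ^ 2 * I2) Filter.atTop (nhds 0) := by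
      have : (fun k : ℕ => 256 * M ^ 2 / ((k : ℝ) + 1) ^ 2 * I2)
          = fun k : ℕ => (256 * M ^ 2 * I2) * (((k : ℝ) + 1) ^ 2)⁻¹ := by
        funext k; ring
      rw [this]
      simpa using h3.const_mul (256 * M ^ 2 * I2)
    have h5 := (tendsto_const_nhds (x := 4 * A) (f := Filter.atTop (α := ℕ))).add h4
    simpa using h5
  have hliminf_le : Filter.liminf (fun k : ℕ => ∫⁻ x, ENNReal.ofReal
        (etaR (m + 1) ((k : ℝ) + 1) x * ∑ i, ∑ j, (ckOp (m + 1) X i j x) ^ 2))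
        Filter.atTop ≤ ENNReal.ofReal (4 * A) := by
    calc Filter.liminf _ Filter.atTop
        ≤ Filter.liminf (fun k : ℕ => ENNReal.ofReal
            (4 * A + 256 * M ^ 2 / ((k : ℝ) + 1) ^ 2 * I2)) Filter.atTop :=
          Filter.liminf_le_liminf (Filter.Eventually.of_forall hkey)
      _ = ENNReal.ofReal (4 * A) := htendsto.liminf_eq
  -- conclude
  have hAeq : ENNReal.ofReal A = ∫⁻ x, ENNReal.ofReal |∑ j, X x j * ckLap (m + 1) X j x| :=
    ofReal_integral_eq_lintegral_ofReal hXd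
      (Filter.Eventually.of_forall fun x => abs_nonneg _)
  calc (∫⁻ x, ENNReal.ofReal (∑ i, ∑ j, (ckOp (m + 1) X i j x) ^ 2))
      ≤ ENNReal.ofReal (4 * A) := hfatou.trans hliminf_le
    _ = ENNReal.ofReal 4 * ENNReal.ofReal A := ENNReal.ofReal_mul (by norm_num)
    _ = ENNReal.ofReal 4 * ∫⁻ x, ENNReal.ofReal |∑ j, X x j * ckLap (m + 1) X j x| := by
        rw [hAeq]
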